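/- arXiv:1607.00547 — 6 statements merged into one kernel-verified Lean document; each statement's English description precedes it below -/
import Mathlib

section
/- Let 𝔊 be a permutation group acting on a finite set V with orbit S, and let 𝔥 ≤ 𝔊 with an orbit T ⊆ S. If |S|/|T| equals the index [𝔊 : 𝔥], then T is a block for 𝔊 and 𝔥 is the setwise stabilizer of T. -/
/-! By orbit–stabilizer the hypothesis reads `[G : Gₜ] = [H : Hₜ]·[G : H] = [G : Gₜ ∩ H]`,
which forces `Gₜ ≤ H`; the orbit of a subgroup containing the point stabilizer is a block
whose setwise stabilizer is that subgroup. -/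

open Pointwise

theorem Subgroup.le_of_index_eq_relIndex_mul_index {G : Type*} [Group G] {K H : Subgroup G}
    (hK : K.index ≠ 0) (h : K.index = K.relIndex H * H.index) : K ≤ H := by
  have hinf : H.relIndex K * K.index = K.relIndex H * H.index := by
    rw [← inf_relIndex_left, relIndex_mul_index inf_le_left, ← inf_relIndex_right,
      relIndex_mul_index inf_le_right]
  rw [← h, Nat.mul_eq_right hK] at hinf
  exact relIndex_eq_one.mp hinf

theorem MulAction.stabilizer_le_of_card_orbit_eq_index_mul {G X : Type*} [Group G]
    [MulAction G X] {H : Subgroup G} {x : X} [Finite (orbit G x)]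
    (h : Nat.card (orbit G x) = H.index * Nat.card (orbit H x)) : stabilizer G x ≤ H := by
  have hrel : (stabilizer G x).relIndex H = Nat.card (orbit H x) := by
    rw [Subgroup.relIndex, Nat.card_coe_set_eq, ← index_stabilizer H x]
    rfl
  refine Subgroup.le_of_index_eq_relIndex_mul_index ?_ ?_
  · rw [index_stabilizer, ← Nat.card_coe_set_eq]
    exact (Nat.card_pos_iff.mpr ⟨⟨⟨x, mem_orbit_self x⟩⟩, ‹_›⟩).ne'
  · rw [index_stabilizer, ← Nat.card_coe_set_eq, h, hrel, mul_comm]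

/-- If H ≤ G has an orbit T inside an orbit S of G with |S| = [G : H]·|T|, then T is a
block for G and H is the setwise stabilizer of T. -/
theorem stmt_8 (G : Type*) {V : Type*} [Group G] [Fintype V] [MulAction G V]
    (H : Subgroup G) (t : V)
    (hcard : Nat.card (MulAction.orbit G t) = H.index * Nat.card (MulAction.orbit H t)) :
    MulAction.IsBlock G (MulAction.orbit H t) ∧
      MulAction.stabilizer G (MulAction.orbit H t) = H := by
  have hle := MulAction.stabilizer_le_of_card_orbit_eq_index_mul hcard
  exact ⟨MulAction.IsBlock.of_orbit hle, MulAction.stabilizer_orbit_eq hle⟩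
end

section
/- Let 𝔊 be a permutation group on a finite set V, B a block for 𝔊 contained in one orbit, 𝔑 = ⋂_{σ∈𝔊} 𝔊_{σB}, and b ∈ B. Then 𝔑·b = B if and only if 𝔑·𝔊_b = 𝔊_B (as sets of group elements). -/
/-!
Since `B` lies in one orbit and is a block, `G_B` acts transitively on `B`, so `B = G_B · b`.
For subgroups `N ≤ H` with `G_b ≤ H`, the Frattini-type argument `h · b = n · b ⇒ n⁻¹ h ∈ G_b`
shows `N G_b = H ↔ N · b = H · b`; apply it with `H = G_B`, which contains `N` (take `σ = 1`).
-/

open Pointwise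

namespace MulAction

variable {G V : Type*} [Group G] [MulAction G V]

theorem IsBlock.orbit_stabilizer_eq_of_subset_orbit {B : Set V} (hB : IsBlock G B) {x a : V}
    (hBx : B ⊆ orbit G x) (ha : a ∈ B) :
    orbit (stabilizer G B) a = B := by
  ext c
  constructor
  · rintro ⟨⟨g, hg⟩, rfl⟩
    change g • a ∈ B
    rw [← mem_stabilizer_iff.mp hg]
    exact Set.smul_mem_smul_set ha
  · intro hc
    have hca : c ∈ orbit G a := orbit_eq_iff.mpr (hBx ha) ▸ hBx hc
    obtain ⟨g, rfl⟩ := hca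
    exact ⟨⟨g, hB.smul_eq_of_mem ha hc⟩, rfl⟩

theorem coe_mul_stabilizer_eq_iff_orbit_eq {N H : Subgroup G} {b : V} (hNH : N ≤ H)
    (hbH : stabilizer G b ≤ H) :
    (N : Set G) * (stabilizer G b : Set G) = H ↔ orbit N b = orbit H b := by
  constructor
  · intro hprod
    refine subset_antisymm (fun _ ⟨⟨n, hn⟩, hnb⟩ ↦ ⟨⟨n, hNH hn⟩, hnb⟩) ?_
    rintro _ ⟨⟨h, hh⟩, rfl⟩
    obtain ⟨n, hn, ξ, hξ, rfl⟩ : h ∈ (N : Set G) * (stabilizer G b : Set G) := hprod ▸ hh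
    exact ⟨⟨n, hn⟩, show n • b = (n * ξ) • b by rw [mul_smul, mem_stabilizer_iff.mp hξ]⟩
  · intro horbit
    apply (Set.mul_subset_iff.mpr fun n hn ξ hξ ↦ H.mul_mem (hNH hn) (hbH hξ)).antisymm
    intro h hh
    obtain ⟨⟨n, hn⟩, hnb⟩ : h • b ∈ orbit N b := horbit ▸ ⟨⟨h, hh⟩, rfl⟩
    replace hnb : n • b = h • b := hnb
    refine ⟨n, hn, n⁻¹ * h, ?_, mul_inv_cancel_left n h⟩
    rw [SetLike.mem_coe, mem_stabilizer_iff, mul_smul, ← hnb, inv_smul_smul]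

end MulAction

theorem stmt_12_general (G : Type*) {V : Type*} [Group G] [MulAction G V]
    (B : Set V) (hB : MulAction.IsBlock G B)
    (x : V) (hBx : B ⊆ MulAction.orbit G x)
    (b : V) (hb : b ∈ B)
    (N : Subgroup G) (hN : N = ⨅ σ : G, MulAction.stabilizer G (σ • B)) :
    MulAction.orbit N b = B ↔
      (N : Set G) * (MulAction.stabilizer G b : Set G) =
        (MulAction.stabilizer G B : Set G) := by
  have hNB : N ≤ MulAction.stabilizer G B := hN ▸ iInf_le_of_le 1 (by rw [one_smul])
  rw [MulAction.coe_mul_stabilizer_eq_iff_orbit_eq hNB (hB.stabilizer_le hb),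
    hB.orbit_stabilizer_eq_of_subset_orbit hBx hb]

/-- For a block B contained in one orbit, with N = ⋂_σ G_{σB} and b ∈ B:
N·b = B iff N·G_b = G_B as subsets of G. -/
theorem stmt_12 (G : Type*) {V : Type*} [Group G] [Fintype V] [MulAction G V]
    (B : Set V) (hB : MulAction.IsBlock G B)
    (x : V) (hBx : B ⊆ MulAction.orbit G x)
    (b : V) (hb : b ∈ B)
    (N : Subgroup G) (hN : N = ⨅ σ : G, MulAction.stabilizer G (σ • B)) :
    MulAction.orbit N b = B ↔
      (N : Set G) * (MulAction.stabilizer G b : Set G) =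
        (MulAction.stabilizer G B : Set G) :=
  stmt_12_general G B hB x hBx b hb N hN
end

section
/- Let 𝔊 be a permutation group on a finite set V, let v', v'' ∈ V, and for x ∈ V let C[x] denote the connected component containing x in the bipartite graph whose vertices are the orbits of 𝔊_{v'} and of 𝔊_{v''}, with two orbits adjacent iff they intersect. Then the set of points lying in C[x] equals the orbit ⟨𝔊_{v'}, 𝔊_{v''}⟩·x of the subgroup generated by the two stabilizers. -/
/-
Orbits of a subgroup `H` form the equivalence relation `orbitRel H V`, and a subgroup lies below
`{g | g • x ≈ x for all x}` exactly when its orbit relation lies below `≈`. This Galois connection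
makes `H ↦ orbitRel H V` preserve suprema, so the orbit relation of `H ⊔ K` is the equivalence
relation generated by "same `H`-orbit or same `K`-orbit", i.e. by chains of overlapping orbits.
-/

namespace MulAction

variable {G α : Type*} [Group G] [MulAction G α]

def setoidFixingSubgroup (r : Setoid α) : Subgroup G where
  carrier := {g | ∀ x : α, r (g • x) x}
  one_mem' x := by rw [one_smul]
  mul_mem' {g h} hg hh x := by
    rw [mul_smul]
    exact r.trans (hg (h • x)) (hh x)
  inv_mem' {g} hg x := by
    simpa only [smul_inv_smul] using r.symm (hg (g⁻¹ • x))

theorem gc_orbitRel_setoidFixingSubgroup :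
    GaloisConnection (fun H : Subgroup G => orbitRel H α) setoidFixingSubgroup := by
  intro H r
  constructor
  · intro h g hg x
    exact h ⟨⟨g, hg⟩, rfl⟩
  · rintro h a b ⟨⟨g, hg⟩, rfl⟩
    exact h hg b

theorem orbitRel_sup (H K : Subgroup G) :
    orbitRel ↥(H ⊔ K) α = orbitRel H α ⊔ orbitRel K α :=
  gc_orbitRel_setoidFixingSubgroup.l_sup

end MulAction

theorem stmt_13_general (G : Type*) {V : Type*} [Group G] [MulAction G V]
    (v' v'' x : V) :
    ∀ y : V,
      Relation.EqvGen (fun a b : V =>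
          a ∈ MulAction.orbit (MulAction.stabilizer G v') b ∨
            a ∈ MulAction.orbit (MulAction.stabilizer G v'') b) x y ↔
        y ∈ MulAction.orbit
          (MulAction.stabilizer G v' ⊔ MulAction.stabilizer G v'' : Subgroup G) x := by
  intro y
  rw [← MulAction.orbitRel_apply, MulAction.orbitRel_sup, Setoid.sup_eq_eqvGen]
  exact ⟨fun h => h.symm, fun h => h.symm⟩

/-- The connected component containing x in the bipartite graph of orbits of the two point
stabilizers (orbits adjacent iff they meet) covers exactly the orbit of x under the
subgroup generated by the two stabilizers: y lies in the same component as x (i.e. is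
connected to x via a chain of overlapping orbits of G_{v'} and G_{v''}) iff y lies in
⟨G_{v'}, G_{v''}⟩·x. -/
theorem stmt_13 (G : Type*) {V : Type*} [Group G] [Fintype V] [MulAction G V]
    (v' v'' x : V) :
    ∀ y : V,
      Relation.EqvGen (fun a b : V =>
          a ∈ MulAction.orbit (MulAction.stabilizer G v') b ∨
            a ∈ MulAction.orbit (MulAction.stabilizer G v'') b) x y ↔
        y ∈ MulAction.orbit
          (MulAction.stabilizer G v' ⊔ MulAction.stabilizer G v'' : Subgroup G) x :=
  stmt_13_general G v' v'' x
end

section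
/- Let 𝔊 act transitively on a finite set V and define x ~ y iff the stabilizers' orbit partitions coincide: Π*_x = Π*_y, where Π*_v is the set of orbits of 𝔊_v on V. Then every equivalence class of ~ is a block for 𝔊, all classes have equal cardinality, and the classes form a block system of 𝔊. -/
/-!
The map `v ↦ Π*_v` sending a point to the orbit partition of its stabilizer is `G`-equivariant,
because `stabilizer G (g • v)` is the conjugate of `stabilizer G v` by `g`. The classes of `~` are
the fibres of this map, and the fibres of any equivariant map are blocks permuted by `G`; under a
transitive action they are all translates of one another, hence equinumerous.
-/

open Pointwise MulAction

namespace MulActionHom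

variable {G X Y : Type*} [Group G] [MulAction G X] [MulAction G Y]

theorem smul_preimage_singleton (f : X →[G] Y) (g : G) (x : X) :
    g • f ⁻¹' {f x} = f ⁻¹' {f (g • x)} := by
  rw [← Group.preimage_smul_set, Set.smul_set_singleton, map_smul]

theorem isBlock_preimage_singleton (f : X →[G] Y) (x : X) : IsBlock G (f ⁻¹' {f x}) :=
  IsBlock.singleton.preimage f

theorem card_preimage_singleton_eq [IsPretransitive G X] (f : X →[G] Y) (x y : X) :
    Nat.card (f ⁻¹' {f x}) = Nat.card (f ⁻¹' {f y}) := by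
  obtain ⟨g, rfl⟩ := exists_smul_eq G x y
  rw [← smul_preimage_singleton, Nat.card_coe_set_eq, Nat.card_coe_set_eq, Set.ncard_smul_set]

end MulActionHom

namespace MulAction

variable (G : Type*) {V : Type*} [Group G] [MulAction G V]

theorem smul_orbit_stabilizer_subset (g : G) (v w : V) :
    g • orbit (stabilizer G v) w ⊆ orbit (stabilizer G (g • v)) (g • w) := by
  rintro _ ⟨_, ⟨⟨h, hh⟩, rfl⟩, rfl⟩
  have hconj : g * h * g⁻¹ ∈ stabilizer G (g • v) := by
    simp only [mem_stabilizer_iff, mul_smul, inv_smul_smul, mem_stabilizer_iff.mp hh]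
  exact ⟨⟨_, hconj⟩, by simp [mul_smul]⟩

theorem smul_orbit_stabilizer (g : G) (v w : V) :
    g • orbit (stabilizer G v) w = orbit (stabilizer G (g • v)) (g • w) := by
  refine (smul_orbit_stabilizer_subset G g v w).antisymm ?_
  rw [Set.subset_smul_set_iff]
  have key := smul_orbit_stabilizer_subset G g⁻¹ (g • v) (g • w)
  rwa [inv_smul_smul, inv_smul_smul] at key

/-- `Π*_v`. -/
def stabilizerOrbits (v : V) : Set (Set V) :=
  {S | ∃ w : V, S = orbit (stabilizer G v) w}

theorem stabilizerOrbits_smul (g : G) (v : V) :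
    stabilizerOrbits G (g • v) = g • stabilizerOrbits G v := by
  ext S
  constructor
  · rintro ⟨w, rfl⟩
    refine ⟨_, ⟨g⁻¹ • w, rfl⟩, ?_⟩
    change g • _ = _
    rw [smul_orbit_stabilizer, smul_inv_smul]
  · rintro ⟨_, ⟨w, rfl⟩, rfl⟩
    exact ⟨g • w, smul_orbit_stabilizer G g v w⟩

def stabilizerOrbitsHom : V →[G] Set (Set V) where
  toFun := stabilizerOrbits G
  map_smul' := stabilizerOrbits_smul G

end MulAction

theorem stmt_15_general (G : Type*) {V : Type*} [Group G] [MulAction G V]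
    [MulAction.IsPretransitive G V] :
    let P : V → Set (Set V) :=
      fun v => {S | ∃ w : V, S = MulAction.orbit (MulAction.stabilizer G v) w}
    let cls : V → Set V := fun x => {y | P y = P x}
    (∀ x : V, MulAction.IsBlock G (cls x)) ∧
      (∀ x y : V, Nat.card (cls x) = Nat.card (cls y)) ∧
      (∀ (σ : G) (x : V), σ • cls x = cls (σ • x)) := by
  intro P cls
  let f : V →[G] Set (Set V) := stabilizerOrbitsHom G
  -- `cls x` is definitionally the fibre `f ⁻¹' {f x}`.
  exact ⟨f.isBlock_preimage_singleton, f.card_preimage_singleton_eq, f.smul_preimage_singleton⟩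

/-- For a transitive G, relate x ~ y iff the orbit partitions of their point stabilizers
coincide. Then every equivalence class is a block for G, all classes have equal
cardinality, and the classes form a block system (G permutes the classes). -/
theorem stmt_15 (G : Type*) {V : Type*} [Group G] [Fintype V] [MulAction G V]
    [MulAction.IsPretransitive G V] :
    let P : V → Set (Set V) :=
      fun v => {S | ∃ w : V, S = MulAction.orbit (MulAction.stabilizer G v) w}
    let cls : V → Set V := fun x => {y | P y = P x}
    (∀ x : V, MulAction.IsBlock G (cls x)) ∧
      (∀ x y : V, Nat.card (cls x) = Nat.card (cls y)) ∧
      (∀ (σ : G) (x : V), σ • cls x = cls (σ • x)) :=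
  stmt_15_general G
end

section
/- Let 𝔊 be a permutation group acting on a finite set V. Suppose B is a block for 𝔊 contained in an orbit T′ and S is an orbit of the setwise stabilizer 𝔊_B contained in another orbit T″ of 𝔊. Then B⁺ := {α·b : α ∈ 𝔊_S}, for b ∈ B, is a block for 𝔊, and 𝔊_S = 𝔊_{B⁺}. -/
open Pointwise

namespace MulAction

theorem subgroup_le_stabilizer_orbit {G α : Type*} [Group G] [MulAction G α]
    (H : Subgroup G) (a : α) : H ≤ stabilizer G (orbit H a) :=
  fun g hg ↦ smul_orbit (⟨g, hg⟩ : H) a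

end MulAction

theorem stmt_18_general (G : Type*) {V : Type*} [Group G] [MulAction G V]
    (B : Set V) (hB : MulAction.IsBlock G B)
    (b : V) (hb : b ∈ B)
    (s : V)
    (S : Set V) (hS : S = MulAction.orbit (MulAction.stabilizer G B) s) :
    MulAction.IsBlock G (MulAction.orbit (MulAction.stabilizer G S) b) ∧
      MulAction.stabilizer G S =
        MulAction.stabilizer G (MulAction.orbit (MulAction.stabilizer G S) b) := by
  have hb_le : MulAction.stabilizer G b ≤ MulAction.stabilizer G S :=
    (hB.stabilizer_le hb).trans (hS ▸ MulAction.subgroup_le_stabilizer_orbit _ s)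
  exact ⟨MulAction.IsBlock.of_orbit hb_le, (MulAction.stabilizer_orbit_eq hb_le).symm⟩

/-- If B is a block contained in the orbit of b and S is an orbit of G_B inside a
different orbit of G, then B⁺ = G_S·b is a block for G, with G_S = G_{B⁺}. -/
theorem stmt_18 (G : Type*) {V : Type*} [Group G] [Fintype V] [MulAction G V]
    (B : Set V) (hB : MulAction.IsBlock G B)
    (b : V) (hb : b ∈ B) (hBo : B ⊆ MulAction.orbit G b)
    (s : V) (hs : s ∉ MulAction.orbit G b)
    (S : Set V) (hS : S = MulAction.orbit (MulAction.stabilizer G B) s) :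
    MulAction.IsBlock G (MulAction.orbit (MulAction.stabilizer G S) b) ∧
      MulAction.stabilizer G S =
        MulAction.stabilizer G (MulAction.orbit (MulAction.stabilizer G S) b) :=
  stmt_18_general G B hB b hb s S hS
end

section
/- Let S be an isometry of ℝⁿ, U an S-invariant subspace, and u₀ ∈ U a unit vector maximizing (or minimizing) ⟨u, Su⟩ over all unit vectors u ∈ U. Then the two-dimensional subspace span{u₀, S u₀} is S-invariant. -/
/-!
The form `u ↦ ⟪u, S u⟫` is the quadratic form of the self-adjoint operator `S + S⋆` (up to the
factor `2`), so an extremal unit vector `u₀` is an eigenvector of it. On the finite-dimensional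
invariant subspace `U` the isometry `S` is invertible with `S⋆ = S⁻¹`, hence
`S u₀ + S⁻¹ u₀ = c • u₀`, and applying `S` gives `S (S u₀) = c • S u₀ - u₀`.
-/

open Metric InnerProductSpace ContinuousLinearMap
open scoped InnerProductSpace

namespace LinearIsometry

variable {R E : Type*} [Ring R] [SeminormedAddCommGroup E] [Module R E]

def restrict (S : E →ₗᵢ[R] E) {U : Submodule R E} (hU : ∀ u ∈ U, S u ∈ U) : U →ₗᵢ[R] U where
  toLinearMap := S.toLinearMap.restrict hU
  norm_map' x := S.norm_map x

@[simp]
theorem coe_restrict_apply (S : E →ₗᵢ[R] E) {U : Submodule R E} (hU : ∀ u ∈ U, S u ∈ U)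
    (x : U) : (S.restrict hU x : E) = S x :=
  rfl

end LinearIsometry

theorem Submodule.apply_mem_span_pair_of_apply_apply_mem {R M : Type*} [CommSemiring R]
    [AddCommMonoid M] [Module R M] {f : M →ₗ[R] M} {x : M}
    (h : f (f x) ∈ span R {x, f x}) {w : M} (hw : w ∈ span R {x, f x}) :
    f w ∈ span R {x, f x} := by
  have hx : f x ∈ span R {x, f x} := subset_span (Set.mem_insert_of_mem _ rfl)
  have hle : span R {x, f x} ≤ (span R {x, f x}).comap f :=
    span_le.mpr (Set.insert_subset_iff.mpr ⟨hx, Set.singleton_subset_iff.mpr h⟩)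
  exact hle hw

variable {F : Type*} [NormedAddCommGroup F] [InnerProductSpace ℝ F] [CompleteSpace F]

theorem ContinuousLinearMap.reApplyInnerSelf_add_adjoint (A : F →L[ℝ] F) (x : F) :
    (A + adjoint A).reApplyInnerSelf x = 2 * ⟪x, A x⟫_ℝ := by
  rw [reApplyInnerSelf_apply, add_apply, inner_add_left, adjoint_inner_left, real_inner_comm,
    RCLike.re_to_real, two_mul]

theorem ContinuousLinearMap.exists_add_adjoint_apply_eq_smul_of_isExtrOn (A : F →L[ℝ] F)
    {x₀ : F} (hextr : IsExtrOn (fun x ↦ ⟪x, A x⟫_ℝ) (sphere 0 ‖x₀‖) x₀) :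
    ∃ c : ℝ, A x₀ + adjoint A x₀ = c • x₀ := by
  have hT : IsSelfAdjoint (A + adjoint A) := IsSelfAdjoint.add_star_self A
  have hextr' : IsLocalExtrOn (A + adjoint A).reApplyInnerSelf (sphere 0 ‖x₀‖) x₀ := by
    have h2 := hextr.comp_mono (g := fun t : ℝ ↦ 2 * t) fun _ _ h ↦ by dsimp; linarith
    simp only [Function.comp_def, ← reApplyInnerSelf_add_adjoint] at h2
    exact h2.localize
  exact ⟨_, hT.eq_smul_self_of_isLocalExtrOn_real hextr'⟩

theorem LinearIsometryEquiv.exists_apply_apply_eq_of_isExtrOn (e : F ≃ₗᵢ[ℝ] F) {x₀ : F}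
    (hextr : IsExtrOn (fun x ↦ ⟪x, e x⟫_ℝ) (sphere 0 ‖x₀‖) x₀) :
    ∃ c : ℝ, e (e x₀) = c • e x₀ - x₀ := by
  obtain ⟨c, hc⟩ := (e : F →L[ℝ] F).exists_add_adjoint_apply_eq_smul_of_isExtrOn hextr
  rw [e.adjoint_eq_symm] at hc
  refine ⟨c, eq_sub_of_add_eq ?_⟩
  simpa using congr(e $hc)

/-- If S is an isometry of ℝⁿ, U an S-invariant subspace, and u₀ ∈ U a unit vector
maximizing (or minimizing) ⟨u, Su⟩ over unit vectors of U, then span{u₀, Su₀} is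
S-invariant. -/
theorem stmt_19 (n : ℕ)
    (S : EuclideanSpace ℝ (Fin n) →ₗᵢ[ℝ] EuclideanSpace ℝ (Fin n))
    (U : Submodule ℝ (EuclideanSpace ℝ (Fin n)))
    (hU : ∀ u ∈ U, S u ∈ U)
    (u₀ : EuclideanSpace ℝ (Fin n)) (hu₀ : u₀ ∈ U) (hnorm : ‖u₀‖ = 1)
    (hext : (∀ u ∈ U, ‖u‖ = 1 → (inner ℝ u (S u) : ℝ) ≤ (inner ℝ u₀ (S u₀) : ℝ)) ∨
            (∀ u ∈ U, ‖u‖ = 1 → (inner ℝ u₀ (S u₀) : ℝ) ≤ (inner ℝ u (S u) : ℝ))) :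
    ∀ w ∈ Submodule.span ℝ {u₀, S u₀}, S w ∈ Submodule.span ℝ {u₀, S u₀} := by
  let e : U ≃ₗᵢ[ℝ] U := (S.restrict hU).toLinearIsometryEquiv rfl
  let x₀ : U := ⟨u₀, hu₀⟩
  have hsphere (x : U) : x ∈ sphere 0 ‖x₀‖ ↔ ‖(x : EuclideanSpace ℝ (Fin n))‖ = 1 := by
    simp [x₀, hnorm]
  have hextr : IsExtrOn (fun x ↦ ⟪x, e x⟫_ℝ) (sphere 0 ‖x₀‖) x₀ := by
    rcases hext with hmax | hmin
    · exact Or.inr fun x hx ↦ hmax x x.2 ((hsphere x).mp hx)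
    · exact Or.inl fun x hx ↦ hmin x x.2 ((hsphere x).mp hx)
  obtain ⟨c, hc⟩ := e.exists_apply_apply_eq_of_isExtrOn hextr
  have hSS : S (S u₀) = c • S u₀ - u₀ := by
    simpa [e, x₀] using congr(($hc : EuclideanSpace ℝ (Fin n)))
  have hSS_mem : S (S u₀) ∈ Submodule.span ℝ {u₀, S u₀} :=
    Submodule.mem_span_pair.mpr ⟨-1, c, by rw [hSS]; module⟩
  exact fun w ↦ Submodule.apply_mem_span_pair_of_apply_apply_mem (f := S.toLinearMap) hSS_mem
end
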